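/- Let k ≥ 3 be an odd integer and χ a real non-principal Dirichlet character modulo q. For every complex number s with Re(s) > 1, ∑_{n=1}^{∞} μ^(k)(n)·g_χ(n)·n^{−s} = ( L(s, χ) / L(ks, χ) ) · ( P(s) / P(ks) ), where L(s,χ) is the Dirichlet L-function of χ and P(s) = ∏_{p ∣ q} (1 − p^{−s})^{−1}. -/

import Mathlib

open Complex Finset
open scoped Classical

/-!
Both sides are Euler products over the primes. Since `g` takes values in `{-1, 0, 1}` on primes
and `k` is odd, `g(p)^k = g(p)`, so the local factor of the `k`-free series at `p` is the
truncated geometric sum `∑_{e<k} (g(p) p^{-s})^e = (1 - g(p) p^{-ks}) / (1 - g(p) p^{-s})`.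
On the other side, `(1 - g(p) p^{-z})⁻¹` is the Euler factor of `L(z, χ)` at `p ∤ q` and the
factor of `P(z)` at `p ∣ q`, so `∏_p (1 - g(p) p^{-z})⁻¹ = L(z, χ) P(z)`.
-/

lemma norm_le_one_of_forall_prime {g : ℕ → ℂ} (hg1 : g 1 = 1)
    (hgmul : ∀ m n : ℕ, g (m * n) = g m * g n) (hgp : ∀ p : ℕ, p.Prime → ‖g p‖ ≤ 1)
    {n : ℕ} (hn : n ≠ 0) : ‖g n‖ ≤ 1 := by
  induction n using Nat.recOnMul with
  | zero => exact absurd rfl hn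
  | one => simp [hg1]
  | prime p hp => exact hgp p hp
  | mul a b ha hb =>
    rw [hgmul, norm_mul]
    exact mul_le_one₀ (ha (left_ne_zero_of_mul hn)) (norm_nonneg _)
      (hb (right_ne_zero_of_mul hn))

lemma apply_pow_of_completelyMultiplicative {g : ℕ → ℂ} (hg1 : g 1 = 1)
    (hgmul : ∀ m n : ℕ, g (m * n) = g m * g n) (n e : ℕ) : g (n ^ e) = g n ^ e := by
  induction e with
  | zero => simp [hg1]
  | succ e ih => rw [pow_succ, hgmul, ih, pow_succ]

namespace Nat

lemma forall_prime_not_pow_dvd_mul_iff {k m n : ℕ} (hk : k ≠ 0) (hmn : m.Coprime n) :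
    (∀ p : ℕ, p.Prime → ¬ p ^ k ∣ m * n) ↔
      (∀ p : ℕ, p.Prime → ¬ p ^ k ∣ m) ∧ ∀ p : ℕ, p.Prime → ¬ p ^ k ∣ n := by
  constructor
  · intro h
    exact ⟨fun p hp hm => h p hp (hm.mul_right n), fun p hp hn => h p hp (hn.mul_left m)⟩
  · rintro ⟨hm, hn⟩ p hp hdvd
    rcases (hmn.isPrimePow_dvd_mul (hp.isPrimePow.pow hk)).mp hdvd with h | h
    exacts [hm p hp h, hn p hp h]

lemma forall_prime_not_pow_dvd_prime_pow_iff {k p e : ℕ} (hp : p.Prime) :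
    (∀ r : ℕ, r.Prime → ¬ r ^ k ∣ p ^ e) ↔ e < k := by
  constructor
  · intro h
    by_contra! hke
    exact h p hp (pow_dvd_pow p hke)
  · intro hek r hr hdvd
    have hrp : r = p := (prime_dvd_prime_iff_eq hr hp).mp
      (hr.dvd_of_dvd_pow ((dvd_pow_self r (by omega)).trans hdvd))
    subst hrp
    exact absurd ((pow_dvd_pow_iff_le_right hr.one_lt).mp hdvd) (by omega)

end Nat

lemma one_sub_mul_prime_cpow_ne_zero {c : ℂ} (hc : ‖c‖ ≤ 1) {p : ℕ} (hp : p.Prime)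
    {z : ℂ} (hz : 1 < z.re) : 1 - c * (p : ℂ) ^ (-z) ≠ 0 := by
  refine sub_ne_zero_of_ne fun h => ?_
  have := mul_le_mul hc (norm_prime_cpow_le_one_half ⟨p, hp⟩ hz) (norm_nonneg _) zero_le_one
  rw [← norm_mul, ← h, norm_one] at this
  norm_num at this

lemma geom_sum_mul_inv_one_sub_mul_pow {K : Type*} [Field K] {ε y : K} {k : ℕ}
    (hε : ε ^ k = ε) (h₁ : 1 - ε * y ≠ 0) (hk : 1 - ε * y ^ k ≠ 0) :
    (∑ e ∈ range k, (ε * y) ^ e) * (1 - ε * y ^ k)⁻¹ = (1 - ε * y)⁻¹ := by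
  have h := geom_sum_mul (ε * y) k
  rw [mul_pow, hε] at h
  rw [mul_inv_eq_iff_eq_mul₀ hk, eq_comm, inv_mul_eq_iff_eq_mul₀ h₁]
  linear_combination h

lemma hasProd_primes_ite_dvd {M : Type*} [CommMonoid M] [TopologicalSpace M] {q : ℕ}
    (hq : q ≠ 0) (φ : ℕ → M) :
    HasProd (fun p : Nat.Primes => if (p : ℕ) ∣ q then φ p else 1)
      (∏ p ∈ q.primeFactors, φ p) := by
  have h := hasProd_prod_of_ne_finset_one (L := .unconditional ℕ) (s := q.primeFactors)
    (f := fun n => if n ∈ q.primeFactors then φ n else 1) fun n hn => if_neg hn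
  rw [prod_ite_mem, inter_self] at h
  have hcomp : (fun p : Nat.Primes => if (p : ℕ) ∣ q then φ p else 1) =
      (fun n => if n ∈ q.primeFactors then φ n else 1) ∘ (↑) := by
    funext p
    show _ = if (p : ℕ) ∈ q.primeFactors then φ p else 1
    simp [Nat.mem_primeFactors_of_ne_zero hq, p.prop]
  rw [hcomp]
  exact (Nat.Primes.coe_nat_injective.hasProd_iff fun n hn => if_neg fun hmem =>
    hn ⟨⟨n, Nat.prime_of_mem_primeFactors hmem⟩, rfl⟩).mpr h

theorem DirichletCharacter.LFunction_mul_prod_eulerProduct_hasProd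
    {q : ℕ} [NeZero q] (χ : DirichletCharacter ℂ q) {g : ℕ → ℂ}
    (hgp : ∀ p : ℕ, p.Prime → g p = if p ∣ q then 1 else χ (p : ZMod q)) {z : ℂ}
    (hz : 1 < z.re) :
    HasProd (fun p : Nat.Primes => (1 - g p * (p : ℂ) ^ (-z))⁻¹)
      (χ.LFunction z * ∏ p ∈ q.primeFactors, (1 - (p : ℂ) ^ (-z))⁻¹) := by
  rw [χ.LFunction_eq_LSeries hz]
  convert (χ.LSeries_eulerProduct_hasProd hz).mul
    (hasProd_primes_ite_dvd (NeZero.ne q) fun p => (1 - (p : ℂ) ^ (-z))⁻¹) using 1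
  funext p
  rw [hgp p p.prop]
  split_ifs with hpq
  · rw [χ.map_nonunit ((ZMod.isUnit_prime_iff_not_dvd p.prop).not.mpr (not_not.mpr hpq))]
    simp
  · simp

theorem powFree_eulerProduct_hasProd {g : ℕ → ℂ} (hg1 : g 1 = 1)
    (hgmul : ∀ m n : ℕ, g (m * n) = g m * g n) (hgp : ∀ p : ℕ, p.Prime → ‖g p‖ ≤ 1)
    {k : ℕ} (hk : k ≠ 0) {f : ℕ → ℂ}
    (hf : ∀ n : ℕ, f n = if ∀ p : ℕ, p.Prime → ¬ p ^ k ∣ n then g n else 0)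
    {s : ℂ} (hs : 1 < s.re) :
    HasProd (fun p : Nat.Primes => ∑ e ∈ range k, (g p * (p : ℂ) ^ (-s)) ^ e)
      (∑' n : ℕ, f n * (n : ℂ) ^ (-s)) := by
  have hf0 : f 0 = 0 := by
    rw [hf, if_neg fun h => h 2 Nat.prime_two (dvd_zero _)]
  have hF1 : f 1 * ((1 : ℕ) : ℂ) ^ (-s) = 1 := by
    rw [hf, if_pos fun p hp h => (Nat.one_lt_pow hk hp.one_lt).not_ge (Nat.le_of_dvd one_pos h)]
    simp [hg1]
  have hFmul {m n : ℕ} (hmn : m.Coprime n) :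
      f (m * n) * ((m * n : ℕ) : ℂ) ^ (-s) =
        f m * (m : ℂ) ^ (-s) * (f n * (n : ℂ) ^ (-s)) := by
    rw [Nat.cast_mul, natCast_mul_natCast_cpow, hf, hf m, hf n,
      Nat.forall_prime_not_pow_dvd_mul_iff hk hmn]
    split_ifs <;> simp_all [mul_mul_mul_comm]
  have hFsum : Summable fun n : ℕ => ‖f n * (n : ℂ) ^ (-s)‖ := by
    refine (summable_riemannZetaSummand hs).of_nonneg_of_le (fun _ => norm_nonneg _) fun n => ?_
    rcases eq_or_ne n 0 with rfl | hn
    · simp [hf0]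
    rw [norm_mul]
    refine mul_le_of_le_one_left (norm_nonneg _) ?_
    rw [hf]
    split_ifs
    exacts [norm_le_one_of_forall_prime hg1 hgmul hgp hn, by simp]
  convert EulerProduct.eulerProduct_hasProd hF1 hFmul hFsum (by simp [hf0]) using 1
  funext p
  rw [tsum_eq_sum (s := range k)]
  · refine sum_congr rfl fun e he => ?_
    rw [hf, if_pos ((Nat.forall_prime_not_pow_dvd_prime_pow_iff p.prop).mpr (mem_range.mp he)),
      apply_pow_of_completelyMultiplicative hg1 hgmul, Nat.cast_pow,
      ← natCast_cpow_natCast_mul, cpow_nat_mul, mul_pow]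
  · intro e he
    rw [hf, if_neg (mt (Nat.forall_prime_not_pow_dvd_prime_pow_iff p.prop).mp
      (by simpa using he)), zero_mul]

theorem dirichlet_series_factorization_odd_general
    (k : ℕ) (hkodd : Odd k)
    (q : ℕ) [NeZero q] (χ : DirichletCharacter ℂ q)
    (hχreal : ∀ n : ZMod q, χ n = -1 ∨ χ n = 0 ∨ χ n = 1)
    (g : ℕ → ℂ) (hg1 : g 1 = 1)
    (hgmul : ∀ m n : ℕ, g (m * n) = g m * g n)
    (hgp : ∀ p : ℕ, p.Prime → g p = if p ∣ q then 1 else χ (p : ZMod q))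
    (f : ℕ → ℂ)
    (hf : ∀ n : ℕ, f n = if ∀ p : ℕ, p.Prime → ¬ p ^ k ∣ n then g n else 0) :
    ∀ s : ℂ, 1 < s.re →
      ∑' n : ℕ, f n * (n : ℂ) ^ (-s)
        = (DirichletCharacter.LFunction χ s / DirichletCharacter.LFunction χ ((k : ℂ) * s))
            * ((∏ p ∈ q.primeFactors, (1 - (p : ℂ) ^ (-s))⁻¹)
                / (∏ p ∈ q.primeFactors, (1 - (p : ℂ) ^ (-((k : ℂ) * s)))⁻¹)) := by
  intro s hs
  have hks : 1 < ((k : ℂ) * s).re := by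
    have hk1 : (1 : ℝ) ≤ k := by exact_mod_cast hkodd.pos
    rw [mul_re, natCast_re, natCast_im, zero_mul, sub_zero]
    nlinarith
  have hg_sign (p : ℕ) (hp : p.Prime) : g p = -1 ∨ g p = 0 ∨ g p = 1 := by
    rw [hgp p hp]
    split_ifs
    exacts [Or.inr (Or.inr rfl), hχreal p]
  have hg_norm (p : ℕ) (hp : p.Prime) : ‖g p‖ ≤ 1 := by
    rcases hg_sign p hp with h | h | h <;> simp [h]
  have hg_pow (p : ℕ) (hp : p.Prime) : g p ^ k = g p := by
    rcases hg_sign p hp with h | h | h <;> simp [h, hkodd.neg_one_pow, hkodd.pos.ne']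
  have hEuler : HasProd (fun p : Nat.Primes => (1 - g p * (p : ℂ) ^ (-s))⁻¹)
      ((∑' n : ℕ, f n * (n : ℂ) ^ (-s)) * (χ.LFunction ((k : ℂ) * s) *
        ∏ p ∈ q.primeFactors, (1 - (p : ℂ) ^ (-((k : ℂ) * s)))⁻¹)) := by
    convert (powFree_eulerProduct_hasProd hg1 hgmul hg_norm hkodd.pos.ne' hf hs).mul
      (χ.LFunction_mul_prod_eulerProduct_hasProd hgp hks) using 1
    funext p
    have hks_ne := one_sub_mul_prime_cpow_ne_zero (hg_norm p p.prop) p.prop hks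
    rw [← mul_neg, cpow_nat_mul] at hks_ne ⊢
    exact (geom_sum_mul_inv_one_sub_mul_pow (hg_pow p p.prop)
      (one_sub_mul_prime_cpow_ne_zero (hg_norm p p.prop) p.prop hs) hks_ne).symm
  have hL : χ.LFunction ((k : ℂ) * s) ≠ 0 := by
    rw [χ.LFunction_eq_LSeries hks]
    exact χ.LSeries_ne_zero_of_one_lt_re hks
  have hP : ∏ p ∈ q.primeFactors, (1 - (p : ℂ) ^ (-((k : ℂ) * s)))⁻¹ ≠ 0 :=
    prod_ne_zero_iff.mpr fun p hp =>
      inv_ne_zero (one_sub_prime_cpow_ne_zero (Nat.prime_of_mem_primeFactors hp) hks)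
  rw [div_mul_div_comm, eq_div_iff (mul_ne_zero hL hP)]
  linear_combination ((χ.LFunction_mul_prod_eulerProduct_hasProd hgp hs).unique hEuler).symm

/-- Odd case Euler factorization: for `Re(s) > 1`,
`∑ μ^(k)(n) g_χ(n) n^{-s} = (L(s,χ)/L(ks,χ)) · (P(s)/P(ks))` with
`P(s) = ∏_{p ∣ q} (1 - p^{-s})⁻¹`. -/
theorem dirichlet_series_factorization_odd
    (k : ℕ) (hk : 3 ≤ k) (hkodd : Odd k)
    (q : ℕ) [NeZero q] (χ : DirichletCharacter ℂ q)
    (hχreal : ∀ n : ZMod q, χ n = -1 ∨ χ n = 0 ∨ χ n = 1) (hχ : χ ≠ 1)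
    (g : ℕ → ℂ) (hg1 : g 1 = 1)
    (hgmul : ∀ m n : ℕ, g (m * n) = g m * g n)
    (hgp : ∀ p : ℕ, p.Prime → g p = if p ∣ q then 1 else χ (p : ZMod q))
    (f : ℕ → ℂ)
    (hf : ∀ n : ℕ, f n = if ∀ p : ℕ, p.Prime → ¬ p ^ k ∣ n then g n else 0) :
    ∀ s : ℂ, 1 < s.re →
      ∑' n : ℕ, f n * (n : ℂ) ^ (-s)
        = (DirichletCharacter.LFunction χ s / DirichletCharacter.LFunction χ ((k : ℂ) * s))
            * ((∏ p ∈ q.primeFactors, (1 - (p : ℂ) ^ (-s))⁻¹)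
                / (∏ p ∈ q.primeFactors, (1 - (p : ℂ) ^ (-((k : ℂ) * s)))⁻¹)) :=
  dirichlet_series_factorization_odd_general k hkodd q χ hχreal g hg1 hgmul hgp f hf
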